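/- If A : [t₀,∞) → M_m(ℝ) is of class C¹ and B : [t₀,∞) → M_m(ℝ) is continuous, then the system ẍ + A(t)ẋ + B(t)x = 0 is L₀-equivalent to some system ξ̈ + V(t)ξ̇ + W(t)ξ = 0 with V, W continuous on [t₀,∞) and V(t) = V(t)ᵀ for all t ≥ t₀. -/

import Mathlib

/-!
Take for `L` the solution of `L' = G L`, `L t₀ = 1`, with the skew coefficient
`G = (Aᵀ - A) / 4`. Skewness makes `(LᵀL)' = Lᵀ(Gᵀ + G)L = 0`, so `L` stays orthogonal: it is
bounded, `|det L| = 1` and `L⁻¹ = Lᵀ`. Since `2G + A = (A + Aᵀ) / 2`, the new coefficient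
`V = Lᵀ(2L' + AL) = Lᵀ((A + Aᵀ) / 2)L` is symmetric. `L` is `C²` because `G` is `C¹`.

The solution exists on all of `[t₀, ∞)` because the Picard iterates `L₀ = 1`,
`Lₙ₊₁(t) = ∫_{t₀}^t G Lₙ` satisfy `‖Lₙ(t)‖ ≤ ‖1‖ (C (t - t₀))ⁿ / n!` on any interval where
`‖G‖ ≤ C`, so their series converges locally uniformly and can be integrated termwise.
-/

open Matrix Set intervalIntegral

attribute [local instance] Matrix.frobeniusNormedAddCommGroup Matrix.frobeniusNormedSpace

/-- An `L_k`-matrix on `[t₀,∞)`: a `C²` matrix function with `|det L(t)| ≥ η > 0` and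
`sup_{t ≥ t₀} ‖(dⁱ/dtⁱ)L(t)‖ < ∞` for every `0 ≤ i ≤ k`. -/
def IsLkMatrix (t₀ : ℝ) (k : ℕ) {m : ℕ} (L : ℝ → Matrix (Fin m) (Fin m) ℝ) : Prop :=
  ContDiffOn ℝ 2 L (Ici t₀) ∧
  (∃ η > (0:ℝ), ∀ t ∈ Ici t₀, η ≤ |(L t).det|) ∧
  (∀ i ≤ k, ∃ M : ℝ, ∀ t ∈ Ici t₀, ‖iteratedDerivWithin i L (Ici t₀) t‖ ≤ M)

/-- The system `ẍ + A(t)ẋ + B(t)x = 0` is `L_k`-equivalent to `ξ̈ + V(t)ξ̇ + W(t)ξ = 0`: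
there is an `L_k`-matrix `L` with `V(t) = L(t)⁻¹(2L̇(t) + A(t)L(t))` and
`W(t) = L(t)⁻¹(L̈(t) + A(t)L̇(t) + B(t)L(t))` for all `t ≥ t₀`. -/
def LkEquiv (t₀ : ℝ) (k : ℕ) {m : ℕ} (A B V W : ℝ → Matrix (Fin m) (Fin m) ℝ) : Prop :=
  ∃ L : ℝ → Matrix (Fin m) (Fin m) ℝ, IsLkMatrix t₀ k L ∧
    ∀ t ∈ Ici t₀,
      V t = (L t)⁻¹ * ((2:ℝ) • derivWithin L (Ici t₀) t + A t * L t) ∧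
      W t = (L t)⁻¹ * (derivWithin (derivWithin L (Ici t₀)) (Ici t₀) t
              + A t * derivWithin L (Ici t₀) t + B t * L t)

/-- `Λ(t) = 2∫_{t₀}^t S(ν) dν + S₀`. -/
noncomputable def Lam (t₀ : ℝ) {m : ℕ} (S : ℝ → Matrix (Fin m) (Fin m) ℝ)
    (S₀ : Matrix (Fin m) (Fin m) ℝ) (t : ℝ) : Matrix (Fin m) (Fin m) ℝ :=
  (2:ℝ) • (∫ ν in t₀..t, S ν) + S₀

open scoped Nat

section LinearODE

variable {R : Type*} [NormedRing R] [NormedAlgebra ℝ R]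

theorem hasDerivWithinAt_integral_Icc [CompleteSpace R] {f : ℝ → R} {a b t : ℝ}
    (hf : ContinuousOn f (Icc a b)) (ht : t ∈ Icc a b) :
    HasDerivWithinAt (fun u => ∫ s in a..u, f s) (f t) (Icc a b) t :=
  have : Fact (t ∈ Icc a b) := ⟨ht⟩
  integral_hasDerivWithinAt_right
    ((hf.mono (Icc_subset_Icc_right ht.2)).intervalIntegrable_of_Icc ht.1)
    (hf.stronglyMeasurableAtFilter_nhdsWithin measurableSet_Icc t) (hf t ht)

variable (t₀ : ℝ) (G : ℝ → R)

noncomputable def picardIter : ℕ → ℝ → R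
  | 0 => fun _ => 1
  | n + 1 => fun t => ∫ s in t₀..t, G s * picardIter n s

noncomputable def fundamentalSolution (t : ℝ) : R :=
  ∑' n, picardIter t₀ G n t

variable {t₀ G}

theorem continuous_picardIter (hG : Continuous G) (n : ℕ) : Continuous (picardIter t₀ G n) := by
  induction n with
  | zero => exact continuous_const
  | succ n ih => exact continuous_primitive (fun a b => (hG.mul ih).intervalIntegrable a b) t₀

theorem norm_picardIter_le {C T : ℝ} (hC : ∀ s ∈ Icc t₀ T, ‖G s‖ ≤ C) (n : ℕ) {t : ℝ}
    (ht : t ∈ Icc t₀ T) :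
    ‖picardIter t₀ G n t‖ ≤ ‖(1 : R)‖ * ((C * (t - t₀)) ^ n / n !) := by
  have hC₀ : 0 ≤ C := (norm_nonneg _).trans (hC t₀ ⟨le_rfl, ht.1.trans ht.2⟩)
  induction n generalizing t with
  | zero => simp [picardIter]
  | succ n ih =>
    have hint : ∫ s in t₀..t, ‖(1 : R)‖ * C ^ (n + 1) / n ! * (s - t₀) ^ n
        = ‖(1 : R)‖ * ((C * (t - t₀)) ^ (n + 1) / (n + 1)!) := by
      simp only [intervalIntegral.integral_const_mul, integral_comp_sub_right (fun s => s ^ n),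
        sub_self, integral_pow]
      rw [zero_pow n.succ_ne_zero, sub_zero]
      push_cast [Nat.factorial_succ, mul_pow]
      field_simp
    refine (norm_integral_le_of_norm_le ht.1 ?_
      (Continuous.intervalIntegrable (by fun_prop) _ _)).trans hint.le
    refine Filter.Eventually.of_forall fun s hs => ?_
    have hs' : s ∈ Icc t₀ T := ⟨hs.1.le, hs.2.trans ht.2⟩
    calc ‖G s * picardIter t₀ G n s‖ ≤ C * (‖(1 : R)‖ * ((C * (s - t₀)) ^ n / n !)) :=
          (norm_mul_le _ _).trans (mul_le_mul (hC s hs') (ih hs') (norm_nonneg _) hC₀)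
      _ = ‖(1 : R)‖ * C ^ (n + 1) / n ! * (s - t₀) ^ n := by rw [mul_pow]; ring

theorem norm_picardIter_le_of_mem_Icc {C T : ℝ} (hC : ∀ s ∈ Icc t₀ T, ‖G s‖ ≤ C) (n : ℕ)
    {t : ℝ} (ht : t ∈ Icc t₀ T) :
    ‖picardIter t₀ G n t‖ ≤ ‖(1 : R)‖ * ((C * (T - t₀)) ^ n / n !) := by
  have hC₀ : 0 ≤ C := (norm_nonneg _).trans (hC t₀ ⟨le_rfl, ht.1.trans ht.2⟩)
  refine (norm_picardIter_le hC n ht).trans ?_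
  gcongr
  · exact mul_nonneg hC₀ (sub_nonneg.mpr ht.1)
  · exact ht.2

theorem fundamentalSolution_self : fundamentalSolution t₀ G t₀ = 1 := by
  rw [fundamentalSolution, tsum_eq_single 0 fun n hn => ?_]
  · rfl
  · obtain ⟨n, rfl⟩ := Nat.exists_eq_succ_of_ne_zero hn
    exact integral_same

theorem contDiffOn_succ_of_hasDerivWithinAt_mul {L : ℝ → R} {s : Set ℝ}
    (hs : UniqueDiffOn ℝ s) (hL : ∀ t ∈ s, HasDerivWithinAt L (G t * L t) s t) {k : ℕ}
    (hG : ContDiffOn ℝ k G s) :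
    ContDiffOn ℝ (k + 1) L s := by
  have hdiff : DifferentiableOn ℝ L s := fun t ht => (hL t ht).differentiableWithinAt
  have hderiv : EqOn (derivWithin L s) (fun t => G t * L t) s := fun t ht =>
    (hL t ht).derivWithin (hs t ht)
  induction k with
  | zero =>
    refine (contDiffOn_succ_iff_derivWithin hs).mpr ⟨hdiff, by simp, ?_⟩
    exact (contDiffOn_zero.mpr (hG.continuousOn.mul hdiff.continuousOn)).congr hderiv
  | succ k ih =>
    have hL' : ContDiffOn ℝ (k + 1) L s := ih (hG.of_le (by norm_cast; omega))
    refine (contDiffOn_succ_iff_derivWithin hs).mpr ⟨hdiff, by simp, ?_⟩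
    exact (hG.mul (by exact_mod_cast hL')).congr hderiv

theorem star_mul_self_eq_one_of_hasDerivWithinAt_mul [StarRing R] [ContinuousStar R]
    [StarModule ℝ R] {L : ℝ → R} (hL : ∀ t ∈ Ici t₀, HasDerivWithinAt L (G t * L t) (Ici t₀) t)
    (hG : ∀ t ∈ Ici t₀, star (G t) = -G t) (hL₀ : L t₀ = 1) :
    ∀ t ∈ Ici t₀, star (L t) * L t = 1 := by
  have hderiv : ∀ t ∈ Ici t₀, HasDerivWithinAt (fun s => star (L s) * L s) 0 (Ici t₀) t := by
    intro t ht
    refine ((hL t ht).star.mul (hL t ht)).congr_deriv ?_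
    rw [star_mul, hG t ht]
    noncomm_ring
  intro t ht
  have hconst := constant_of_has_deriv_right_zero
    (fun s hs => (hderiv s (Icc_subset_Ici_self hs)).continuousWithinAt.mono Icc_subset_Ici_self)
    (fun s hs => (hderiv s (Ico_subset_Icc_self.trans Icc_subset_Ici_self hs)).mono
      (Ici_subset_Ici.mpr hs.1))
    t ⟨ht, le_rfl⟩
  simpa [hL₀] using hconst

variable [CompleteSpace R]

theorem summable_picardIter {C T : ℝ} (hC : ∀ s ∈ Icc t₀ T, ‖G s‖ ≤ C) {t : ℝ}
    (ht : t ∈ Icc t₀ T) : Summable fun n => picardIter t₀ G n t :=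
  .of_norm_bounded ((Real.summable_pow_div_factorial _).mul_left _)
    fun n => norm_picardIter_le hC n ht

theorem continuousOn_fundamentalSolution (hG : Continuous G) (T : ℝ) :
    ContinuousOn (fundamentalSolution t₀ G) (Icc t₀ T) := by
  obtain ⟨C, hC⟩ := isCompact_Icc.exists_bound_of_continuousOn hG.continuousOn
  exact continuousOn_tsum (fun n => (continuous_picardIter hG n).continuousOn)
    ((Real.summable_pow_div_factorial _).mul_left _)
    fun n t ht => norm_picardIter_le_of_mem_Icc (T := T) hC n ht

theorem fundamentalSolution_eq_one_add_integral (hG : Continuous G) {t : ℝ} (ht : t₀ ≤ t) :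
    fundamentalSolution t₀ G t = 1 + ∫ s in t₀..t, G s * fundamentalSolution t₀ G s := by
  obtain ⟨C, hC⟩ :=
    isCompact_Icc.exists_bound_of_continuousOn (hG.continuousOn (s := Icc t₀ t))
  have hterms : HasSum (fun n => picardIter t₀ G (n + 1) t)
      (∫ s in t₀..t, G s * fundamentalSolution t₀ G s) := by
    refine hasSum_integral_of_dominated_convergence
      (fun n _ => C * (‖(1 : R)‖ * ((C * (t - t₀)) ^ n / n !)))
      (fun n => (hG.mul (continuous_picardIter hG n)).aestronglyMeasurable)
      (fun n => Filter.Eventually.of_forall fun s hs => ?_)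
      (Filter.Eventually.of_forall fun _ _ =>
        ((Real.summable_pow_div_factorial _).mul_left _).mul_left _)
      intervalIntegrable_const
      (Filter.Eventually.of_forall fun s hs => ?_)
    all_goals rw [uIoc_of_le ht] at hs
    · have hs' : s ∈ Icc t₀ t := Ioc_subset_Icc_self hs
      exact (norm_mul_le _ _).trans (mul_le_mul (hC s hs')
        (norm_picardIter_le_of_mem_Icc hC n hs') (norm_nonneg _) ((norm_nonneg _).trans (hC s hs')))
    · exact ((summable_picardIter hC (Ioc_subset_Icc_self hs)).hasSum).mul_left (G s)
  refine ((hasSum_nat_add_iff' 1).mp ?_).tsum_eq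
  simpa [picardIter] using hterms

theorem hasDerivWithinAt_fundamentalSolution (hG : Continuous G) {t : ℝ} (ht : t₀ ≤ t) :
    HasDerivWithinAt (fundamentalSolution t₀ G) (G t * fundamentalSolution t₀ G t)
      (Ici t₀) t := by
  have hmem : t ∈ Icc t₀ (t + 1) := ⟨ht, by linarith⟩
  have hIcc : Icc t₀ (t + 1) ∈ nhdsWithin t (Ici t₀) := by
    rw [← Ici_inter_Iic]
    exact inter_mem_nhdsWithin _ (Iic_mem_nhds (lt_add_one t))
  refine (((hasDerivWithinAt_integral_Icc (hG.continuousOn.mul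
    (continuousOn_fundamentalSolution hG _)) hmem).const_add 1).congr
      (fun s hs => fundamentalSolution_eq_one_add_integral hG hs.1)
      (fundamentalSolution_eq_one_add_integral hG ht)).mono_of_mem_nhdsWithin hIcc

theorem exists_hasDerivWithinAt_mul_Ici (hG : ContinuousOn G (Ici t₀)) :
    ∃ L : ℝ → R, L t₀ = 1 ∧ ∀ t ∈ Ici t₀, HasDerivWithinAt L (G t * L t) (Ici t₀) t := by
  set G' : ℝ → R := fun t => G (max t t₀)
  have hG' : Continuous G' :=
    hG.comp_continuous (continuous_id.max continuous_const) fun t => le_max_right t t₀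
  refine ⟨fundamentalSolution t₀ G', fundamentalSolution_self, fun t ht => ?_⟩
  simpa [G', max_eq_left (mem_Ici.mp ht)] using hasDerivWithinAt_fundamentalSolution hG' ht

end LinearODE

attribute [local instance] Matrix.frobeniusNormedRing Matrix.frobeniusNormedAlgebra

section Orthogonal

variable {n : Type*} [Fintype n] [DecidableEq n] {U : Matrix n n ℝ}

theorem abs_det_of_mem_orthogonalGroup (hU : U ∈ orthogonalGroup n ℝ) : |U.det| = 1 :=
  CStarRing.norm_of_mem_unitary (det_of_mem_unitary hU)

theorem frobenius_norm_of_mem_orthogonalGroup (hU : U ∈ orthogonalGroup n ℝ) :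
    ‖U‖ = √(Fintype.card n) := by
  have hrow : ∀ i, ∑ j, U i j ^ 2 = 1 := fun i => by
    simpa [mul_apply, ← sq] using congrFun (congrFun ((mem_orthogonalGroup_iff n ℝ).mp hU) i) i
  simp [frobenius_norm_def, hrow, Real.sqrt_eq_rpow]

theorem continuousOn_inv_of_mem_orthogonalGroup {X : Type*} [TopologicalSpace X]
    {f : X → Matrix n n ℝ} {s : Set X} (hf : ContinuousOn f s)
    (hO : ∀ x ∈ s, f x ∈ orthogonalGroup n ℝ) : ContinuousOn (fun x => (f x)⁻¹) s :=
  hf.star.congr fun x hx => inv_eq_left_inv (Unitary.star_mul_self_of_mem (hO x hx))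

theorem isSymm_inv_mul_two_smul_skew_mul_add (hU : U ∈ orthogonalGroup n ℝ)
    (S : Matrix n n ℝ) :
    (U⁻¹ * ((2 : ℝ) • ((4 : ℝ)⁻¹ • (star S - S) * U) + S * U)).IsSymm := by
  have hsymm : (2 : ℝ) • ((4 : ℝ)⁻¹ • (star S - S) * U) + S * U
      = (2 : ℝ)⁻¹ • (S + star S) * U := by
    simp only [smul_mul_assoc, sub_mul, add_mul, smul_smul]
    module
  rw [inv_eq_left_inv (Unitary.star_mul_self_of_mem hU), hsymm, ← Matrix.mul_assoc, IsSymm,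
    ← conjTranspose_eq_transpose_of_trivial]
  exact ((IsSelfAdjoint.all _).smul (.add_star_self S)).conjugate' U

theorem exists_mem_orthogonalGroup_hasDerivWithinAt_mul {t₀ : ℝ} {G : ℝ → Matrix n n ℝ}
    {k : ℕ} (hG : ContDiffOn ℝ k G (Ici t₀)) (hskew : ∀ t ∈ Ici t₀, star (G t) = -G t) :
    ∃ L : ℝ → Matrix n n ℝ, ContDiffOn ℝ (k + 1) L (Ici t₀) ∧
      (∀ t ∈ Ici t₀, L t ∈ orthogonalGroup n ℝ) ∧
      ∀ t ∈ Ici t₀, HasDerivWithinAt L (G t * L t) (Ici t₀) t := by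
  obtain ⟨L, hL₀, hL⟩ := exists_hasDerivWithinAt_mul_Ici hG.continuousOn
  exact ⟨L, contDiffOn_succ_of_hasDerivWithinAt_mul (uniqueDiffOn_Ici t₀) hL hG,
    fun t ht => (mem_orthogonalGroup_iff' n ℝ).mpr
      (star_mul_self_eq_one_of_hasDerivWithinAt_mul hL hskew hL₀ t ht), hL⟩

end Orthogonal

theorem isLkMatrix_zero_of_mem_orthogonalGroup {t₀ : ℝ} {m : ℕ}
    {L : ℝ → Matrix (Fin m) (Fin m) ℝ} (hL : ContDiffOn ℝ 2 L (Ici t₀))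
    (hO : ∀ t ∈ Ici t₀, L t ∈ orthogonalGroup (Fin m) ℝ) : IsLkMatrix t₀ 0 L := by
  refine ⟨hL, ⟨1, one_pos, fun t ht => (abs_det_of_mem_orthogonalGroup (hO t ht)).ge⟩,
    fun i hi => ⟨√m, fun t ht => ?_⟩⟩
  rw [Nat.le_zero.mp hi, iteratedDerivWithin_zero,
    frobenius_norm_of_mem_orthogonalGroup (hO t ht), Fintype.card_fin]

/-- If `A` is `C¹` and `B` is continuous on `[t₀,∞)`, then the system
`ẍ + A(t)ẋ + B(t)x = 0` is `L₀`-equivalent to some system `ξ̈ + V(t)ξ̇ + W(t)ξ = 0`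
with `V, W` continuous and `V(t)` symmetric for all `t ≥ t₀`. -/
theorem stmt_3 {m : ℕ} (t₀ : ℝ) (A B : ℝ → Matrix (Fin m) (Fin m) ℝ)
    (hA : ContDiffOn ℝ 1 A (Ici t₀)) (hB : ContinuousOn B (Ici t₀)) :
    ∃ V W : ℝ → Matrix (Fin m) (Fin m) ℝ,
      ContinuousOn V (Ici t₀) ∧ ContinuousOn W (Ici t₀) ∧
      (∀ t ∈ Ici t₀, (V t)ᵀ = V t) ∧ LkEquiv t₀ 0 A B V W := by
  set G : ℝ → Matrix (Fin m) (Fin m) ℝ := fun t => (4 : ℝ)⁻¹ • (star (A t) - A t)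
  have hG : ContDiffOn ℝ 1 G (Ici t₀) :=
    (((starL' ℝ).contDiff.comp_contDiffOn hA).sub hA).const_smul _
  have hskew : ∀ t ∈ Ici t₀, star (G t) = -G t := fun t _ => by
    simp only [G, star_smul, star_sub, star_star, star_trivial]
    module
  obtain ⟨L, hL2, hO, hL⟩ := exists_mem_orthogonalGroup_hasDerivWithinAt_mul hG hskew
  have hLinv := continuousOn_inv_of_mem_orthogonalGroup hL2.continuousOn hO
  have hL' := hL2.continuousOn_derivWithin (uniqueDiffOn_Ici t₀) one_le_two
  have hL'' := (hL2.derivWithin (uniqueDiffOn_Ici t₀) (m := 1) le_rfl).continuousOn_derivWithin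
    (uniqueDiffOn_Ici t₀) le_rfl
  have hAc := hA.continuousOn
  have hLc := hL2.continuousOn
  refine ⟨fun t => (L t)⁻¹ * ((2 : ℝ) • derivWithin L (Ici t₀) t + A t * L t),
    fun t => (L t)⁻¹ * (derivWithin (derivWithin L (Ici t₀)) (Ici t₀) t
      + A t * derivWithin L (Ici t₀) t + B t * L t),
    by fun_prop, by fun_prop, fun t ht => ?_,
    L, isLkMatrix_zero_of_mem_orthogonalGroup hL2 hO, fun t ht => ⟨rfl, rfl⟩⟩
  have hderiv : derivWithin L (Ici t₀) t = G t * L t :=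
    (hL t ht).derivWithin (uniqueDiffOn_Ici t₀ t ht)
  simp only [hderiv]
  exact isSymm_inv_mul_two_smul_skew_mul_add (hO t ht) (A t)
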